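/- arXiv:2301.12932 — 2 statements merged into one kernel-verified Lean document; each statement's English description precedes it below -/
import Mathlib

section
/- The series ∑_{k=0}^∞ (6k+1) · ((1/2)_k)^3 / (k!^3 · 4^k) converges to 4/π, where (x)_k denotes the rising factorial x(x+1)⋯(x+k−1). -/
open Filter Real

/-- Rising factorial (Pochhammer symbol) `(x)_k = x(x+1)⋯(x+k-1)`. -/
noncomputable def poch (x : ℝ) : ℕ → ℝ
  | 0 => 1
  | k + 1 => poch x k * (x + k)

/-!
This is a WZ proof. With `B n k = (1/2)_k^3 (1/2)_n^2 / (4^k k! (n+k)!^2)`, the pair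
`F n k = (6k + 4n + 1) B n k`, `G n k = 8k B n k` satisfies
`F n k - F (n+1) k = G n k - G n (k+1)`, so `∑ₖ F n k` does not depend on `n`; the series of the
theorem is the case `n = 0`. As `n → ∞`, `B n k ≤ 4⁻ᵏ / (n+1)²` for `k ≥ 1` kills every term
but `F n 0 = (4n+1) ((1/2)_n / n!)²`, which tends to `4/π` by Wallis' product.
-/

open Topology Nat

theorem tsum_eq_tsum_zero_of_wz {E : Type*} [AddCommGroup E] [TopologicalSpace E]
    [IsTopologicalAddGroup E] [T2Space E] {F G : ℕ → ℕ → E}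
    (hF : ∀ n, Summable (F n)) (hG₀ : ∀ n, G n 0 = 0) (hG : ∀ n, Tendsto (G n) atTop (𝓝 0))
    (hFG : ∀ n k, F n k - F (n + 1) k = G n k - G n (k + 1)) (n : ℕ) :
    ∑' k, F n k = ∑' k, F 0 k := by
  induction n with
  | zero => rfl
  | succ n ih =>
    rw [← ih, eq_comm, ← sub_eq_zero]
    have hsum := ((hF n).hasSum.sub (hF (n + 1)).hasSum).tendsto_sum_nat
    have htel : (fun N ↦ ∑ k ∈ Finset.range N, (F n k - F (n + 1) k)) = fun N ↦ -G n N := by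
      ext N
      simp only [hFG, Finset.sum_range_sub', hG₀, zero_sub]
    rw [htel] at hsum
    simpa using tendsto_nhds_unique hsum (hG n).neg

theorem poch_pos {x : ℝ} (hx : 0 < x) (k : ℕ) : 0 < poch x k := by
  induction k with
  | zero => simp [poch]
  | succ k ih => rw [poch]; positivity

theorem poch_le_factorial {x : ℝ} (hx₀ : 0 ≤ x) (hx₁ : x ≤ 1) (k : ℕ) : poch x k ≤ k ! := by
  induction k with
  | zero => simp [poch]
  | succ k ih =>
    rw [poch, factorial_succ, cast_mul, mul_comm ((k + 1 : ℕ) : ℝ)]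
    exact mul_le_mul ih (by push_cast; linarith) (by positivity) (by positivity)

theorem poch_half_mul_four_pow_mul_factorial (n : ℕ) :
    poch (1 / 2) n * (4 ^ n * n !) = (2 * n)! := by
  induction n with
  | zero => simp [poch]
  | succ n ih =>
    rw [show 2 * (n + 1) = 2 * n + 1 + 1 by ring, factorial_succ, factorial_succ, factorial_succ,
      poch]
    push_cast
    rw [← ih]
    ring

theorem summable_affine_mul_geometric {r : ℝ} (hr : |r| < 1) (a b : ℝ) :
    Summable fun k : ℕ ↦ (a * k + b) * r ^ k := by
  have hk : Summable fun k : ℕ ↦ (k : ℝ) * r ^ k := by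
    simpa using summable_pow_mul_geometric_of_norm_lt_one 1 (r := r) hr
  simpa [add_mul, mul_assoc] using
    (hk.mul_left a).add ((summable_geometric_of_abs_lt_one hr).mul_left b)

namespace RamanujanWZ

noncomputable def B (n k : ℕ) : ℝ :=
  poch (1 / 2) k ^ 3 * poch (1 / 2) n ^ 2 / (4 ^ k * k ! * (n + k)! ^ 2)

noncomputable def F (n k : ℕ) : ℝ := (6 * k + 4 * n + 1) * B n k

noncomputable def G (n k : ℕ) : ℝ := 8 * k * B n k

theorem F_sub_F_succ (n k : ℕ) : F n k - F (n + 1) k = G n k - G n (k + 1) := by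
  have hnk (m : ℕ) (hm : m = n + k + 1) : (m ! : ℝ) = (n + k + 1) * (n + k)! := by
    rw [hm, factorial_succ]; push_cast; rfl
  simp only [F, G, B, poch]
  rw [hnk (n + 1 + k) (by ring), hnk (n + (k + 1)) (by ring), factorial_succ k]
  push_cast
  field_simp
  ring

theorem B_pos (n k : ℕ) : 0 < B n k := by
  have hk := poch_pos (x := 1 / 2) (by norm_num) k
  have hn := poch_pos (x := 1 / 2) (by norm_num) n
  unfold B
  positivity

theorem B_le_choose (n k : ℕ) : B n k ≤ (1 / 4) ^ k / ((n + k).choose k) ^ 2 := by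
  have hratio (m : ℕ) : 0 ≤ poch (1 / 2) m / m ! ∧ poch (1 / 2) m / m ! ≤ 1 :=
    ⟨by have := poch_pos (x := 1 / 2) (by norm_num) m; positivity,
      div_le_one_of_le₀ (poch_le_factorial (by norm_num) (by norm_num) m) (by positivity)⟩
  have hB : B n k = (poch (1 / 2) k / k !) ^ 3 * (poch (1 / 2) n / n !) ^ 2 * (1 / 4) ^ k
      / ((n + k).choose k) ^ 2 := by
    rw [B, ← add_choose_mul_factorial_mul_factorial n k]
    push_cast
    rw [one_div_pow]
    field_simp
  rw [hB]
  gcongr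
  calc _ ≤ (1 : ℝ) ^ 3 * 1 ^ 2 * (1 / 4) ^ k := by
        gcongr <;> first | exact (hratio _).1 | exact (hratio _).2
    _ = _ := by ring

theorem B_le (n k : ℕ) : B n k ≤ (1 / 4) ^ k := by
  refine (B_le_choose n k).trans (div_le_self (by positivity) ?_)
  exact_mod_cast one_le_pow₀ (choose_pos (le_add_left k n))

theorem B_le_of_pos (n : ℕ) {k : ℕ} (hk : 0 < k) : B n k ≤ (1 / 4) ^ k / (n + 1) ^ 2 := by
  refine (B_le_choose n k).trans (div_le_div_of_nonneg_left (by positivity) (by positivity) ?_)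
  have : n + 1 ≤ (n + k).choose k := by
    rw [choose_symm_add.symm, ← choose_succ_self_right]
    exact choose_le_choose n (by omega)
  gcongr
  exact_mod_cast this

theorem F_nonneg (n k : ℕ) : 0 ≤ F n k := by
  have := B_pos n k
  unfold F
  positivity

theorem F_le (n k : ℕ) : F n k ≤ (6 * k + (4 * n + 1)) * (1 / 4) ^ k := by
  rw [F, ← add_assoc]
  gcongr
  exact B_le n k

theorem F_le_of_pos (n : ℕ) {k : ℕ} (hk : 0 < k) :
    F n k ≤ (6 * k + 1) * (1 / 4) ^ k / (n + 1) := by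
  have hk₁ : (1 : ℝ) ≤ k := by exact_mod_cast hk
  calc F n k ≤ (6 * k + 4 * n + 1) * ((1 / 4) ^ k / (n + 1) ^ 2) := by
        rw [F]; gcongr; exact B_le_of_pos n hk
    _ ≤ (6 * k + 1) * (n + 1) * ((1 / 4) ^ k / (n + 1) ^ 2) := by
        gcongr; nlinarith [(n.cast_nonneg : (0 : ℝ) ≤ n)]
    _ = _ := by field_simp

theorem summable_F (n : ℕ) : Summable (F n) :=
  (summable_affine_mul_geometric (by norm_num) 6 (4 * n + 1)).of_nonneg_of_le
    (F_nonneg n) (F_le n)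

theorem tendsto_G (n : ℕ) : Tendsto (G n) atTop (𝓝 0) := by
  have hlim :=
    (tendsto_self_mul_const_pow_of_lt_one (r := 1 / 4) (by norm_num) (by norm_num)).const_mul 8
  rw [mul_zero] at hlim
  refine squeeze_zero (fun k ↦ ?_) (fun k ↦ ?_) hlim
  · have := B_pos n k
    unfold G
    positivity
  · rw [G, mul_assoc]
    gcongr
    exact B_le n k

theorem F_zero_eq (n : ℕ) : F n 0 = (1 + 4 * n) / (1 + 2 * n) / Wallis.W n := by
  have h16 : (2 : ℝ) ^ (4 * n) = (4 ^ n) ^ 2 := by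
    rw [← pow_mul, show (4 : ℝ) = 2 ^ 2 by norm_num, ← pow_mul]
    ring_nf
  rw [F, B, Wallis.W_eq_factorial_ratio, ← poch_half_mul_four_pow_mul_factorial, h16]
  have := poch_pos (x := 1 / 2) (by norm_num) n
  simp only [poch, factorial_zero, cast_one, cast_zero, add_zero, pow_zero]
  field_simp
  ring

theorem tendsto_F_zero : Tendsto (fun n ↦ F n 0) atTop (𝓝 (4 / π)) := by
  have hq := tendsto_add_mul_div_add_mul_atTop_nhds (1 : ℝ) 1 4 (d := 2) two_ne_zero
  have h := hq.div Wallis.tendsto_W_nhds_pi_div_two (by positivity)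
  rw [show (4 : ℝ) / 2 / (π / 2) = 4 / π by field_simp] at h
  exact h.congr fun n ↦ (F_zero_eq n).symm

theorem tendsto_tsum_F_succ : Tendsto (fun n ↦ ∑' k, F n (k + 1)) atTop (𝓝 0) := by
  set c : ℕ → ℝ := fun k ↦ (6 * k + 1) * (1 / 4) ^ k
  have hc : Summable fun k ↦ c (k + 1) :=
    (summable_nat_add_iff 1).mpr (summable_affine_mul_geometric (by norm_num) 6 1)
  have hbound (n : ℕ) : ∑' k, F n (k + 1) ≤ (∑' k, c (k + 1)) * (1 / (n + 1)) := by
    rw [mul_one_div, ← tsum_div_const]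
    exact ((summable_nat_add_iff 1).mpr (summable_F n)).tsum_le_tsum
      (fun k ↦ F_le_of_pos n k.succ_pos) (hc.div_const _)
  have hlim := tendsto_one_div_add_atTop_nhds_zero_nat.const_mul (∑' k, c (k + 1))
  rw [mul_zero] at hlim
  exact squeeze_zero (fun n ↦ tsum_nonneg fun k ↦ F_nonneg n (k + 1)) hbound hlim

theorem tsum_F_zero : ∑' k, F 0 k = 4 / π := by
  have hconst := tsum_eq_tsum_zero_of_wz summable_F (by simp [G]) tendsto_G F_sub_F_succ
  have hlim : Tendsto (fun n ↦ ∑' k, F n k) atTop (𝓝 (4 / π)) := by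
    have := tendsto_F_zero.add tendsto_tsum_F_succ
    rw [add_zero] at this
    exact this.congr fun n ↦ ((summable_F n).tsum_eq_zero_add).symm
  simp only [hconst] at hlim
  exact tendsto_nhds_unique tendsto_const_nhds hlim

end RamanujanWZ

theorem ramanujan_series :
    Tendsto (fun n : ℕ => ∑ k ∈ Finset.range n,
      (6 * (k : ℝ) + 1) * (poch (1/2) k) ^ 3 / ((k.factorial : ℝ) ^ 3 * 4 ^ k))
      atTop (nhds (4 / π)) := by
  have h := (RamanujanWZ.summable_F 0).hasSum.tendsto_sum_nat
  rw [RamanujanWZ.tsum_F_zero] at h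
  refine h.congr fun N ↦ Finset.sum_congr rfl fun k _ ↦ ?_
  simp only [RamanujanWZ.F, RamanujanWZ.B, poch, cast_zero, mul_zero, add_zero, zero_add]
  field_simp
end

section
/- The double series ∑_{k=1}^∞ (4k+3) · (3/2)_k · ((1/2)_k)^3 / (k! · ((k+1)!)^3) · ∑_{i=1}^k ( 1/(2i−1)^2 − 1/(4(i+1)^2) ) converges to 8/3 − 24/π^2. -/
/-!
Write `r k = (1/2)_k / k!`, `P k = k (2k+1) r k ^ 4` and `d i` for the inner summand. The outer
coefficient is the difference `16 (P (k+1) - P k)`, and `d k * P k = Q (k+1) - Q k` with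
`Q k = P k (1 - 1/(2k-1)^2)`, `Q 1 = 0`. Abel summation therefore puts the `n`-th partial sum in
the closed form `16 (P (n+1) H n - Q (n+1))`, `H n = ∑_{i ≤ n} d i`. Wallis' product gives
`r k ^ 2 (2k+1) → 2/π`, hence `P k, Q k → 2/π²`, while `ζ(2) = π²/6` and its odd part `π²/8`
give `H n → π²/8 - (π²/6 - 1)/4 = π²/12 + 1/4`.
-/

open Filter Real

open Finset Topology

lemma poch_succ (x : ℝ) (k : ℕ) : poch x (k + 1) = poch x k * (x + k) := rfl

lemma mul_poch_add_one (x : ℝ) (k : ℕ) : x * poch (x + 1) k = poch x k * (x + k) := by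
  induction k with
  | zero => simp [poch]
  | succ k ih =>
    rw [poch_succ, poch_succ, ← mul_assoc, ih]
    push_cast
    ring

noncomputable def halfPochRatio (k : ℕ) : ℝ := poch (1 / 2) k / k.factorial

lemma halfPochRatio_succ (k : ℕ) :
    halfPochRatio (k + 1) = halfPochRatio k * ((2 * k + 1) / (2 * k + 2)) := by
  have hk : (k.factorial : ℝ) ≠ 0 := by positivity
  rw [halfPochRatio, halfPochRatio, poch_succ, Nat.factorial_succ]
  push_cast
  field_simp
  ring

lemma wallis_W_mul_sq_halfPochRatio (k : ℕ) :
    Wallis.W k * (halfPochRatio k ^ 2 * (2 * k + 1)) = 1 := by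
  induction k with
  | zero => simp [Wallis.W, halfPochRatio, poch]
  | succ k ih =>
    rw [Wallis.W_succ, halfPochRatio_succ]
    push_cast
    field_simp
    linear_combination (2 * (k : ℝ) + 3) * ih

lemma tendsto_sq_halfPochRatio_mul :
    Tendsto (fun k : ℕ => halfPochRatio k ^ 2 * (2 * k + 1)) atTop (𝓝 (2 / π)) := by
  have h := Wallis.tendsto_W_nhds_pi_div_two.inv₀ (by positivity)
  rw [inv_div] at h
  refine h.congr fun k => ?_
  rw [← mul_eq_one_iff_inv_eq₀ (Wallis.W_pos k).ne']
  exact wallis_W_mul_sq_halfPochRatio k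

noncomputable def summandPrimitive (k : ℕ) : ℝ := k * (2 * k + 1) * halfPochRatio k ^ 4

noncomputable def abelPrimitive (k : ℕ) : ℝ :=
  summandPrimitive k * (1 - 1 / (2 * (k : ℝ) - 1) ^ 2)

lemma summand_eq_sub (k : ℕ) :
    (4 * (k : ℝ) + 3) * poch (3 / 2) k * poch (1 / 2) k ^ 3 /
        ((k.factorial : ℝ) * ((k + 1).factorial : ℝ) ^ 3) =
      16 * (summandPrimitive (k + 1) - summandPrimitive k) := by
  have h32 : poch (3 / 2) k = 2 * poch (1 / 2) k * (1 / 2 + k) := by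
    have := mul_poch_add_one (1 / 2) k
    norm_num at this
    linarith
  have hk : (k.factorial : ℝ) ≠ 0 := by positivity
  rw [summandPrimitive, summandPrimitive, halfPochRatio_succ, halfPochRatio, h32,
    Nat.factorial_succ]
  push_cast
  field_simp
  ring

lemma two_mul_natCast_sub_one_ne_zero (k : ℕ) : 2 * (k : ℝ) - 1 ≠ 0 := by
  have : (2 * k : ℝ) ≠ 1 := by exact_mod_cast (by omega : 2 * k ≠ 1)
  exact sub_ne_zero.2 this

lemma innerTerm_mul_summandPrimitive (k : ℕ) :
    (1 / (2 * (k : ℝ) - 1) ^ 2 - 1 / (4 * ((k : ℝ) + 1) ^ 2)) * summandPrimitive k =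
      abelPrimitive (k + 1) - abelPrimitive k := by
  have h₀ := two_mul_natCast_sub_one_ne_zero k
  have h₁ := two_mul_natCast_sub_one_ne_zero (k + 1)
  push_cast at h₁
  rw [abelPrimitive, abelPrimitive, summandPrimitive, summandPrimitive, halfPochRatio_succ]
  push_cast
  field_simp
  ring

lemma sum_Icc_sub_mul_sum_Icc {R : Type*} [CommRing R] (p d : ℕ → R) (n : ℕ) :
    ∑ k ∈ Icc 1 n, (p (k + 1) - p k) * ∑ i ∈ Icc 1 k, d i =
      p (n + 1) * ∑ i ∈ Icc 1 n, d i - ∑ k ∈ Icc 1 n, p k * d k := by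
  induction n with
  | zero => simp
  | succ n ih =>
    rw [sum_Icc_succ_top (by omega), ih, sum_Icc_succ_top (by omega),
      sum_Icc_succ_top (by omega)]
    ring

lemma abelPrimitive_one : abelPrimitive 1 = 0 := by
  norm_num [abelPrimitive]

lemma partialSum_eq_primitives (n : ℕ) :
    ∑ k ∈ Icc 1 n,
      (4 * (k : ℝ) + 3) * poch (3 / 2) k * (poch (1 / 2) k) ^ 3 /
          ((k.factorial : ℝ) * ((k + 1).factorial : ℝ) ^ 3) *
        ∑ i ∈ Icc 1 k, (1 / (2 * (i : ℝ) - 1) ^ 2 - 1 / (4 * ((i : ℝ) + 1) ^ 2)) =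
      16 * (summandPrimitive (n + 1) *
          ∑ i ∈ Icc 1 n, (1 / (2 * (i : ℝ) - 1) ^ 2 - 1 / (4 * ((i : ℝ) + 1) ^ 2)) -
        abelPrimitive (n + 1)) := by
  have htelescope : ∑ k ∈ Icc 1 n, (abelPrimitive (k + 1) - abelPrimitive k) =
      abelPrimitive (n + 1) := by
    rw [← Ico_add_one_right_eq_Icc, sum_Ico_sub (f := abelPrimitive) (by omega : 1 ≤ n + 1),
      abelPrimitive_one, sub_zero]
  simp_rw [summand_eq_sub, mul_assoc, ← mul_sum, sum_Icc_sub_mul_sum_Icc, mul_comm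
    (summandPrimitive _) (_ - _), innerTerm_mul_summandPrimitive, htelescope]

lemma tendsto_summandPrimitive : Tendsto summandPrimitive atTop (𝓝 (2 / π ^ 2)) := by
  have hratio : Tendsto (fun k : ℕ => (0 + 1 * (k : ℝ)) / (1 + 2 * k)) atTop (𝓝 (1 / 2)) :=
    tendsto_add_mul_div_add_mul_atTop_nhds 0 1 1 two_ne_zero
  have h := hratio.mul (tendsto_sq_halfPochRatio_mul.pow 2)
  rw [show (1 : ℝ) / 2 * (2 / π) ^ 2 = 2 / π ^ 2 by ring] at h
  refine h.congr fun k => ?_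
  rw [summandPrimitive]
  field_simp
  ring

lemma tendsto_abelPrimitive : Tendsto abelPrimitive atTop (𝓝 (2 / π ^ 2)) := by
  have hlin : Tendsto (fun k : ℕ => 2 * (k : ℝ) - 1) atTop atTop :=
    tendsto_atTop_add_const_right _ _
      (tendsto_natCast_atTop_atTop.const_mul_atTop two_pos)
  have hcorr : Tendsto (fun k : ℕ => 1 / (2 * (k : ℝ) - 1) ^ 2) atTop (𝓝 0) := by
    refine ((tendsto_pow_atTop two_ne_zero).comp hlin).inv_tendsto_atTop.congr fun k => ?_
    simp
  have h := tendsto_summandPrimitive.mul (tendsto_const_nhds (x := (1 : ℝ)) |>.sub hcorr)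
  rwa [sub_zero, mul_one] at h

lemma hasSum_one_div_odd_sq : HasSum (fun k : ℕ => 1 / (2 * (k : ℝ) + 1) ^ 2) (π ^ 2 / 8) := by
  set f : ℕ → ℝ := fun n => 1 / (n : ℝ) ^ 2
  have heven : HasSum (fun k => f (2 * k)) (π ^ 2 / 24) := by
    rw [show π ^ 2 / 24 = 1 / 4 * (π ^ 2 / 6) by ring]
    refine (hasSum_zeta_two.mul_left (1 / 4)).congr_fun fun k => ?_
    simp only [f]
    push_cast
    ring
  have hodd : Summable (fun k => f (2 * k + 1)) :=
    hasSum_zeta_two.summable.comp_injective fun a b h => by simpa using h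
  have htsum := (heven.even_add_odd hodd.hasSum).unique hasSum_zeta_two
  convert hodd.hasSum using 1
  · ext k
    simp [f]
  · linarith

lemma tendsto_sum_innerTerm :
    Tendsto (fun n : ℕ => ∑ i ∈ Icc 1 n, (1 / (2 * (i : ℝ) - 1) ^ 2 - 1 / (4 * ((i : ℝ) + 1) ^ 2)))
      atTop (𝓝 (π ^ 2 / 12 + 1 / 4)) := by
  have hshift := (hasSum_nat_add_iff' 2).2 hasSum_zeta_two
  have h := (hasSum_one_div_odd_sq.sub (hshift.mul_left (1 / 4))).tendsto_sum_nat
  convert h using 2 with n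
  · rw [← Ico_add_one_right_eq_Icc, sum_Ico_eq_sum_range, add_tsub_cancel_right]
    refine sum_congr rfl fun i _ => ?_
    push_cast
    rw [show 2 * (1 + (i : ℝ)) - 1 = 2 * i + 1 by ring]
    field_simp
    ring
  · norm_num [sum_range_succ]
    ring

theorem thm_2_3_3 :
    Tendsto (fun n : ℕ => ∑ k ∈ Finset.Icc 1 n,
      (4 * (k : ℝ) + 3) * poch (3/2) k * (poch (1/2) k) ^ 3 /
          ((k.factorial : ℝ) * ((k+1).factorial : ℝ) ^ 3) *
        ∑ i ∈ Finset.Icc 1 k, (1 / (2 * (i : ℝ) - 1) ^ 2 - 1 / (4 * ((i : ℝ) + 1) ^ 2)))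
      atTop (nhds (8/3 - 24 / π ^ 2)) := by
  have hshift := tendsto_add_atTop_nat 1
  have h := (((tendsto_summandPrimitive.comp hshift).mul tendsto_sum_innerTerm).sub
    (tendsto_abelPrimitive.comp hshift)).const_mul 16
  rw [show (16 : ℝ) * (2 / π ^ 2 * (π ^ 2 / 12 + 1 / 4) - 2 / π ^ 2) = 8 / 3 - 24 / π ^ 2 by
    field_simp; ring] at h
  exact h.congr fun n => (partialSum_eq_primitives n).symm
end
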